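/- Fix $n \geq 2$, a Borel set $K \subseteq \mathbb{R}^n$ with $0 \in K$, a positive Borel measure $\mu$ on $\mathbb{R}^n$, and a function $h : (0,\infty) \to (0,\infty)$ with constants $M > 0$, $c > 4$ such that $\int_0^{c\epsilon} h(r)/r^{n-1}\, dr \leq M\, h(\epsilon)/\epsilon^{n-2}$ for all $\epsilon \leq \epsilon_1$. Choose $\gamma > 1$, $p > 1$ with $c = 2\gamma(1+p)$, and suppose there are $A, B > 0$ and $\epsilon_0 > c\,\epsilon_1$ such that $\mu(K \cap \mathbb{B}(0,\epsilon)) \geq A h(\epsilon)$ for $\epsilon < \epsilon_0$ and $\mu(K \cap \mathbb{B}(x,\epsilon)) \leq B h(\epsilon)$ for all $x \in K$, $\epsilon < \epsilon_0$. Write $K_\epsilon = K \cap \mathbb{B}(0,\epsilon)$ and define $f_\epsilon(w) = \frac{1}{\mu(K_\epsilon)} \int_{K_\epsilon} g(|x - w|)\, d\mu(x)$. Then for every $w \in \mathbb{B}(0,1) \setminus \{0\}$ with $|w| \leq p\epsilon$ and every $\epsilon < \epsilon_1$, one has $f_\epsilon(w) \leq g(|w|) + \frac{(2\gamma p)^{n-2}\max\{1,n-2\}\,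 B M}{A\, |w|^{n-2}}$. -/

import Mathlib

open MeasureTheory Metric Filter Set ENNReal Topology

noncomputable section

/-- Euclidean space `ℝⁿ`. -/
abbrev Eucl (n : ℕ) := EuclideanSpace ℝ (Fin n)

/-- The kernel `g : (0,∞) → ℝ`, `g(r) = -log r` if `n = 2` and `g(r) = r^{2-n}`
if `n > 2`. -/
noncomputable def ker (n : ℕ) (r : ℝ) : ℝ :=
  if n = 2 then -Real.log r else r ^ ((2 : ℝ) - n)

/-!
Write `g(|x - w|) ≤ g(|w|) + (g(|x - w|) - g(|w|))⁺` and express the positive part as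
`∫_{2|x-w|}^{2|w|} |d/ds g(s/2)| ds`. By Tonelli, integrating the positive part over `K_ε` gives
`∫_0^{2|w|} |d/ds g(s/2)| μ(K_ε ∩ {2|x - w| < s}) ds`. Each of these sets lies in `𝔹(x₀, s)` for
some `x₀ ∈ K` (this is why the radius is halved), so the upper density bound and the integral
condition on `h` bound the whole term by `max{1, n-2} 2^{n-2} B M h(ε)/ε^{n-2}`. Finally
`μ(K_ε) ≥ A h(ε)` and `|w| ≤ pε ≤ γpε` turn this into the stated constant.
-/

variable {n : ℕ}

-- A junk value (`Real.log 0 = 0`, `0 ^ x = 0` for `x ≠ 0`), needed at the point `x = w`.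
theorem ker_zero (hn : 2 ≤ n) : ker n 0 = 0 := by
  unfold _root_.ker
  split_ifs with h2
  · simp
  · have : (2 : ℝ) < n := by exact_mod_cast (by omega : 2 < n)
    exact Real.zero_rpow (by linarith)

theorem ker_nonneg {r : ℝ} (hr₀ : 0 ≤ r) (hr₁ : r ≤ 1) : 0 ≤ ker n r := by
  unfold _root_.ker
  split_ifs
  · exact neg_nonneg.mpr (Real.log_nonpos hr₀ hr₁)
  · exact Real.rpow_nonneg hr₀ _

theorem ker_antitoneOn (hn : 2 ≤ n) : AntitoneOn (ker n) (Ioi 0) := by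
  intro a ha b _ hab
  unfold _root_.ker
  split_ifs
  · exact neg_le_neg (Real.log_le_log ha hab)
  · have : (2 : ℝ) ≤ n := by exact_mod_cast hn
    exact Real.rpow_le_rpow_of_nonpos ha hab (by linarith)

theorem hasDerivAt_ker (hn : 2 ≤ n) {t : ℝ} (ht : 0 < t) :
    HasDerivAt (ker n) (-(max 1 ((n : ℝ) - 2) / t ^ (n - 1))) t := by
  rcases eq_or_lt_of_le hn with rfl | h3
  · rw [show ker 2 = fun r ↦ -Real.log r from funext fun r ↦ if_pos rfl]
    simpa using (Real.hasDerivAt_log ht.ne').fun_neg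
  · have h3' : (3 : ℝ) ≤ n := by exact_mod_cast h3
    rw [show ker n = fun r ↦ r ^ ((2 : ℝ) - n) from funext fun r ↦ if_neg (by omega)]
    convert Real.hasDerivAt_rpow_const (p := (2 : ℝ) - n) (Or.inl ht.ne') using 1
    rw [max_eq_right (by linarith), show (2 : ℝ) - n - 1 = -((n - 1 : ℕ) : ℝ) by
      push_cast [Nat.cast_sub (by omega : 1 ≤ n)]; ring, Real.rpow_neg ht.le, Real.rpow_natCast]
    ring

def kerDensity (n : ℕ) (s : ℝ) : ℝ := max 1 ((n : ℝ) - 2) * 2 ^ (n - 2) / s ^ (n - 1)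

theorem kerDensity_nonneg {s : ℝ} (hs : 0 ≤ s) : 0 ≤ kerDensity n s := by
  unfold kerDensity
  positivity

theorem hasDerivAt_ker_half (hn : 2 ≤ n) {s : ℝ} (hs : 0 < s) :
    HasDerivAt (fun s ↦ ker n (s / 2)) (-kerDensity n s) s := by
  refine ((hasDerivAt_ker hn (half_pos hs)).comp s ((hasDerivAt_id' s).div_const 2)).congr_deriv ?_
  obtain ⟨k, rfl⟩ : ∃ k, n = k + 2 := ⟨n - 2, by omega⟩
  simp only [kerDensity, Nat.add_sub_cancel, show k + 2 - 1 = k + 1 by omega]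
  rw [div_pow, pow_succ 2 k]
  field_simp

theorem intervalIntegrable_kerDensity {a b : ℝ} (ha : 0 < a) (hab : a ≤ b) :
    IntervalIntegrable (kerDensity n) volume a b := by
  refine ContinuousOn.intervalIntegrable fun s hs ↦ ?_
  rw [uIcc_of_le hab] at hs
  exact (continuousAt_const.div (continuousAt_id.pow _)
    (pow_ne_zero _ (ha.trans_le hs.1).ne')).continuousWithinAt

theorem integral_kerDensity (hn : 2 ≤ n) {a b : ℝ} (ha : 0 < a) (hab : a ≤ b) :
    ∫ s in a..b, kerDensity n s = ker n (a / 2) - ker n (b / 2) := by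
  rw [intervalIntegral.integral_eq_sub_of_hasDerivAt (f := fun s ↦ -ker n (s / 2))
    (fun s hs ↦ by
      rw [uIcc_of_le hab] at hs
      simpa using (hasDerivAt_ker_half hn (ha.trans_le hs.1)).fun_neg)
    (intervalIntegrable_kerDensity ha hab)]
  ring

theorem lintegral_kerDensity (hn : 2 ≤ n) {a b : ℝ} (ha : 0 < a) (hab : a ≤ b) :
    ∫⁻ s in Ioo a b, ENNReal.ofReal (kerDensity n s) =
      ENNReal.ofReal (ker n (a / 2) - ker n (b / 2)) := by
  rw [← integral_kerDensity hn ha hab, intervalIntegral.integral_of_le hab,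
    setLIntegral_congr Ioo_ae_eq_Ioc, ofReal_integral_eq_lintegral_ofReal]
  · exact (intervalIntegrable_iff_integrableOn_Ioc_of_le hab).mp
      (intervalIntegrable_kerDensity ha hab)
  · filter_upwards [ae_restrict_mem measurableSet_Ioc] with s hs
    exact kerDensity_nonneg (ha.trans hs.1).le

theorem ofReal_ker_le (hn : 2 ≤ n) {d r : ℝ} (hd : 0 ≤ d) (hr : 0 < r) :
    ENNReal.ofReal (ker n d) ≤
      ENNReal.ofReal (ker n r) + ∫⁻ s in Ioo (2 * d) (2 * r), ENNReal.ofReal (kerDensity n s) := by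
  rcases hd.eq_or_lt with rfl | hd
  · simp [ker_zero hn]
  rcases le_or_gt r d with hrd | hdr
  · exact le_add_right (ENNReal.ofReal_le_ofReal (ker_antitoneOn hn hr hd hrd))
  · rw [lintegral_kerDensity hn (by positivity) (by linarith), mul_div_cancel_left₀ _ two_ne_zero,
      mul_div_cancel_left₀ _ two_ne_zero]
    exact (le_of_eq (by rw [add_sub_cancel])).trans ENNReal.ofReal_add_le

theorem lintegral_setLIntegral_Ioo_eq_lintegral_meas_lt_mul {X : Type*} [MeasurableSpace X]
    {ν : Measure X} [SFinite ν] {φ : X → ℝ} (hφ : Measurable φ) {a : ℝ} (ha : ∀ x, a ≤ φ x)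
    {f : ℝ → ℝ≥0∞} (hf : Measurable f) (b : ℝ) :
    ∫⁻ x, (∫⁻ s in Ioo (φ x) b, f s) ∂ν = ∫⁻ s in Ioo a b, ν {x | φ x < s} * f s := by
  have hIoo : ∀ x, ∫⁻ s in Ioo (φ x) b, f s = ∫⁻ s in Ioo a b, (Ioi (φ x)).indicator f s := by
    intro x
    rw [lintegral_indicator measurableSet_Ioi, Measure.restrict_restrict measurableSet_Ioi,
      Ioi_inter_Ioo, max_eq_left (ha x)]
  simp_rw [hIoo]
  rw [lintegral_lintegral_swap]
  · refine setLIntegral_congr_fun measurableSet_Ioo fun s _ ↦ ?_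
    simp_rw [indicator_apply, mem_Ioi]
    rw [mul_comm, ← lintegral_indicator_const (measurableSet_lt hφ measurable_const)]
    rfl
  · simp only [Function.uncurry_def, indicator_apply, mem_Ioi]
    exact (Measurable.ite (measurableSet_lt (hφ.comp measurable_fst) measurable_snd)
      (hf.comp measurable_snd) measurable_const).aemeasurable

theorem measure_setOf_two_mul_dist_lt_inter_le {X : Type*} [PseudoMetricSpace X]
    [MeasurableSpace X] {μ : Measure X} {K S : Set X} (hSK : S ⊆ K) (w : X) {s : ℝ} {m : ℝ≥0∞}
    (hK : ∀ x ∈ K, μ (K ∩ ball x s) ≤ m) :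
    μ ({y | 2 * dist y w < s} ∩ S) ≤ m := by
  rcases ({y | 2 * dist y w < s} ∩ S).eq_empty_or_nonempty with
    hempty | ⟨x₀, hx₀ : 2 * dist x₀ w < s, hx₀S⟩
  · simp [hempty]
  refine (measure_mono ?_).trans (hK x₀ (hSK hx₀S))
  rintro y ⟨hy : 2 * dist y w < s, hyS⟩
  exact ⟨hSK hyS, by rw [mem_ball]; linarith [dist_triangle_right y x₀ w]⟩

section MetricMeasure

variable {X : Type*} [PseudoMetricSpace X] [MeasurableSpace X] [OpensMeasurableSpace X]
  {ν : Measure X} [SFinite ν]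

theorem lintegral_ofReal_ker_dist_le_lintegral_meas_lt_mul (hn : 2 ≤ n) (w : X) {r : ℝ}
    (hr : 0 < r) :
    ∫⁻ x, ENNReal.ofReal (ker n (dist x w)) ∂ν ≤ ENNReal.ofReal (ker n r) * ν univ +
      ∫⁻ s in Ioo 0 (2 * r), ν {x | 2 * dist x w < s} * ENNReal.ofReal (kerDensity n s) := by
  have hφ : Measurable fun x ↦ 2 * dist x w :=
    (continuous_const.mul (continuous_id.dist continuous_const)).measurable
  have hf : Measurable fun s ↦ ENNReal.ofReal (kerDensity n s) :=
    ENNReal.measurable_ofReal.comp (by unfold kerDensity; fun_prop)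
  calc ∫⁻ x, ENNReal.ofReal (ker n (dist x w)) ∂ν
      ≤ ∫⁻ x, (ENNReal.ofReal (ker n r) +
          ∫⁻ s in Ioo (2 * dist x w) (2 * r), ENNReal.ofReal (kerDensity n s)) ∂ν :=
        lintegral_mono fun x ↦ ofReal_ker_le hn dist_nonneg hr
    _ = _ := by
        rw [lintegral_add_left measurable_const, lintegral_const,
          lintegral_setLIntegral_Ioo_eq_lintegral_meas_lt_mul hφ (fun x ↦ by positivity) hf]

theorem lintegral_ofReal_ker_dist_le (hn : 2 ≤ n) (w : X) {r : ℝ} (hr : 0 < r) {B : ℝ}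
    (hB : 0 ≤ B) {h : ℝ → ℝ}
    (hν : ∀ s ∈ Ioo 0 (2 * r), ν {x | 2 * dist x w < s} ≤ ENNReal.ofReal (B * h s)) :
    ∫⁻ x, ENNReal.ofReal (ker n (dist x w)) ∂ν ≤ ENNReal.ofReal (ker n r) * ν univ +
      ENNReal.ofReal (max 1 ((n : ℝ) - 2) * 2 ^ (n - 2) * B) *
        ∫⁻ s in Ioo 0 (2 * r), ENNReal.ofReal (h s / s ^ (n - 1)) := by
  refine (lintegral_ofReal_ker_dist_le_lintegral_meas_lt_mul hn w hr).trans
    (add_le_add_right ?_ _)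
  rw [← lintegral_const_mul' _ _ ENNReal.ofReal_ne_top]
  refine setLIntegral_mono' measurableSet_Ioo fun s hs ↦ ?_
  have hC : 0 ≤ max 1 ((n : ℝ) - 2) * 2 ^ (n - 2) * B := by positivity
  calc ν {x | 2 * dist x w < s} * ENNReal.ofReal (kerDensity n s)
      ≤ ENNReal.ofReal (B * h s) * ENNReal.ofReal (kerDensity n s) := by gcongr; exact hν s hs
    _ = _ := by
        rw [← ENNReal.ofReal_mul' (kerDensity_nonneg hs.1.le), ← ENNReal.ofReal_mul hC, kerDensity]
        congr 1
        ring

end MetricMeasure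

theorem mul_two_pow_mul_div_pow_le {k : ℕ} {A B C M x γ p ε ρ : ℝ} (hA : 0 < A) (hB : 0 ≤ B)
    (hC : 0 ≤ C) (hM : 0 ≤ M) (hx : 0 ≤ x) (hε : 0 < ε) (hρ : 0 < ρ) (hργp : ρ ≤ γ * p * ε) :
    C * 2 ^ k * B * (M * (x / ε ^ k)) ≤ A * x * ((2 * γ * p) ^ k * C * B * M / (A * ρ ^ k)) := by
  have hratio : (2 / ε) ^ k ≤ (2 * γ * p / ρ) ^ k :=
    pow_le_pow_left₀ (by positivity) (by rw [div_le_div_iff₀ hε hρ]; linarith) _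
  calc C * 2 ^ k * B * (M * (x / ε ^ k))
      = C * B * M * x * (2 / ε) ^ k := by rw [div_pow]; ring
    _ ≤ C * B * M * x * (2 * γ * p / ρ) ^ k := by gcongr
    _ = _ := by rw [div_pow]; field_simp

theorem f_eps_bound_case_II_general {n : ℕ} (hn : 2 ≤ n)
    (K : Set (Eucl n))
    (μ : Measure (Eucl n))
    (h : ℝ → ℝ) (hpos : ∀ r : ℝ, 0 < r → 0 < h r)
    (M c : ℝ) (hM : 0 < M)
    (ε₁ : ℝ)
    (hint : ∀ ε : ℝ, 0 < ε → ε ≤ ε₁ →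
      ∫⁻ r in Ioo (0 : ℝ) (c * ε), ENNReal.ofReal (h r / r ^ (n - 1)) ≤
        ENNReal.ofReal (M * (h ε / ε ^ (n - 2))))
    (γ p : ℝ) (hγ : 1 < γ) (hp : 1 < p) (hcγp : c = 2 * γ * (1 + p))
    (A B ε₀ : ℝ) (hA : 0 < A) (hB : 0 < B) (hε₀ : c * ε₁ < ε₀)
    (h1 : ∀ ε : ℝ, 0 < ε → ε < ε₀ → ENNReal.ofReal (A * h ε) ≤ μ (K ∩ ball 0 ε))
    (h2 : ∀ x ∈ K, ∀ ε : ℝ, 0 < ε → ε < ε₀ → μ (K ∩ ball x ε) ≤ ENNReal.ofReal (B * h ε)) :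
    ∀ ε : ℝ, 0 < ε → ε < ε₁ → ∀ w : Eucl n, w ∈ ball (0 : Eucl n) 1 → w ≠ 0 →
      ‖w‖ ≤ p * ε →
      (μ (K ∩ ball 0 ε))⁻¹ *
          ∫⁻ x in K ∩ ball 0 ε, ENNReal.ofReal (ker n ‖x - w‖) ∂μ ≤
        ENNReal.ofReal (ker n ‖w‖ +
          (2 * γ * p) ^ (n - 2) * max 1 ((n : ℝ) - 2) * B * M / (A * ‖w‖ ^ (n - 2))) := by
  intro ε hε hεε₁ w hw1 hw0 hwpε
  set S := K ∩ ball (0 : Eucl n) ε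
  have hw : 0 < ‖w‖ := norm_pos_iff.mpr hw0
  have h2w : 2 * ‖w‖ ≤ c * ε := by rw [hcγp]; nlinarith
  have hcε : c * ε < ε₀ := by nlinarith
  have hS : ENNReal.ofReal (A * h ε) ≤ μ S := h1 ε hε (by nlinarith)
  have hS0 : μ S ≠ 0 := ((ENNReal.ofReal_pos.mpr (mul_pos hA (hpos ε hε))).trans_le hS).ne'
  rcases eq_or_ne (μ S) ⊤ with hS_top | hS_top
  · simp [hS_top] -- `∞⁻¹ = 0` in `ℝ≥0∞`
  have : IsFiniteMeasure (μ.restrict S) := isFiniteMeasure_restrict.mpr hS_top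
  have hpot := lintegral_ofReal_ker_dist_le (ν := μ.restrict S) hn w hw hB.le (h := h)
    fun s hs ↦ by
      rw [Measure.restrict_apply (measurableSet_lt (by fun_prop) measurable_const)]
      exact measure_setOf_two_mul_dist_lt_inter_le inter_subset_left w
        fun x hx ↦ h2 x hx s hs.1 (by linarith [hs.2])
  have hh : ∫⁻ s in Ioo 0 (2 * ‖w‖), ENNReal.ofReal (h s / s ^ (n - 1)) ≤
      ENNReal.ofReal (M * (h ε / ε ^ (n - 2))) :=
    (lintegral_mono_set (Ioo_subset_Ioo_right h2w)).trans (hint ε hε hεε₁.le)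
  set X := (2 * γ * p) ^ (n - 2) * max 1 ((n : ℝ) - 2) * B * M / (A * ‖w‖ ^ (n - 2))
  have hX : ENNReal.ofReal (max 1 ((n : ℝ) - 2) * 2 ^ (n - 2) * B) *
      ENNReal.ofReal (M * (h ε / ε ^ (n - 2))) ≤ μ S * ENNReal.ofReal X := by
    rw [← ENNReal.ofReal_mul (by positivity)]
    refine le_trans ?_ (mul_le_mul_left hS _)
    rw [← ENNReal.ofReal_mul (by nlinarith [hpos ε hε])]
    exact ENNReal.ofReal_le_ofReal (mul_two_pow_mul_div_pow_le hA hB.le (by positivity) hM.le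
      (hpos ε hε).le hε hw (by nlinarith))
  rw [ENNReal.inv_mul_le_iff hS0 hS_top,
    ENNReal.ofReal_add (ker_nonneg hw.le (mem_ball_zero_iff.mp hw1).le) (by positivity),
    mul_add, mul_comm (μ S)]
  simp_rw [← dist_eq_norm]
  rw [Measure.restrict_apply_univ] at hpot
  exact hpot.trans (add_le_add_right ((mul_le_mul_right hh _).trans hX) _)

/-- **Case II of Step 2 of the proof of Main Theorem 1.** Fix `n ≥ 2`, a Borel set
`K ∋ 0`, a positive Borel measure `μ`, and an admissible `h` with constants `M > 0`,
`c > 4`, valid for `ε ≤ ε₁`. Choose `γ > 1`, `p > 1` with `c = 2γ(1+p)`, and let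
`A, B > 0`, `ε₀ > c ε₁` be such that `μ(K ∩ 𝔹(0,ε)) ≥ A h(ε)` and
`μ(K ∩ 𝔹(x,ε)) ≤ B h(ε)` for `x ∈ K`, `ε < ε₀`. Then, writing `K_ε = K ∩ 𝔹(0,ε)` and
`f_ε(w) = μ(K_ε)⁻¹ ∫_{K_ε} g(|x-w|) dμ(x)` (a layer-cake integral of the positive
part), for every `ε < ε₁` and `w ∈ 𝔹(0,1) \ {0}` with `|w| ≤ pε` one has
`f_ε(w) ≤ g(|w|) + (2γp)^{n-2} max{1,n-2} B M / (A |w|^{n-2})`. -/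
theorem f_eps_bound_case_II {n : ℕ} (hn : 2 ≤ n)
    (K : Set (Eucl n)) (hK : MeasurableSet K) (h0K : (0 : Eucl n) ∈ K)
    (μ : Measure (Eucl n))
    (h : ℝ → ℝ) (hpos : ∀ r : ℝ, 0 < r → 0 < h r)
    (M c : ℝ) (hM : 0 < M) (hc : 4 < c)
    (ε₁ : ℝ) (hε₁ : 0 < ε₁)
    (hint : ∀ ε : ℝ, 0 < ε → ε ≤ ε₁ →
      ∫⁻ r in Ioo (0 : ℝ) (c * ε), ENNReal.ofReal (h r / r ^ (n - 1)) ≤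
        ENNReal.ofReal (M * (h ε / ε ^ (n - 2))))
    (γ p : ℝ) (hγ : 1 < γ) (hp : 1 < p) (hcγp : c = 2 * γ * (1 + p))
    (A B ε₀ : ℝ) (hA : 0 < A) (hB : 0 < B) (hε₀ : c * ε₁ < ε₀)
    (h1 : ∀ ε : ℝ, 0 < ε → ε < ε₀ → ENNReal.ofReal (A * h ε) ≤ μ (K ∩ ball 0 ε))
    (h2 : ∀ x ∈ K, ∀ ε : ℝ, 0 < ε → ε < ε₀ → μ (K ∩ ball x ε) ≤ ENNReal.ofReal (B * h ε)) :
    ∀ ε : ℝ, 0 < ε → ε < ε₁ → ∀ w : Eucl n, w ∈ ball (0 : Eucl n) 1 → w ≠ 0 →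
      ‖w‖ ≤ p * ε →
      (μ (K ∩ ball 0 ε))⁻¹ *
          ∫⁻ x in K ∩ ball 0 ε, ENNReal.ofReal (ker n ‖x - w‖) ∂μ ≤
        ENNReal.ofReal (ker n ‖w‖ +
          (2 * γ * p) ^ (n - 2) * max 1 ((n : ℝ) - 2) * B * M / (A * ‖w‖ ^ (n - 2))) :=
  f_eps_bound_case_II_general hn K μ h hpos M c hM ε₁ hint γ p hγ hp hcγp A B ε₀ hA hB hε₀ h1 h2
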